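/- arXiv:2507.19461 — 4 statements merged into one kernel-verified Lean document; each statement's English description precedes it below -/
import Mathlib

section
/- Chore swap eliminates envy of the swapping agent towards the received bundle: let X be a λ-EFX-friendly allocation with λ ≥ 1, let i ∈ N_H with X_i = S_i ∪ {j_i} not λ-EFX, and let ℓ be the agent minimizing d_i(X_ℓ), so that d_i(X_i) > λ·d_i(X_ℓ). After the (i, ℓ) swap producing X'_i = S_i ∪ X_ℓ and X'_ℓ = {j_i}, agent i does not λ-EFX-envy X'_ℓ: d_i(X'_i) ≤ λ·d_i(j_i). -/
open Finset

/-- `λ·x < j + s ≤ λ·j`. -/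
theorem lt_of_mul_lt_add_of_le_sub_one_mul {s x j lam : ℝ} (hlam : 0 < lam)
    (hs : s ≤ (lam - 1) * j) (h : lam * x < j + s) : x < j :=
  lt_of_mul_lt_mul_left (by linarith) hlam.le

theorem stmt_6_general {N M : Type*} [DecidableEq M]
    (d : N → M → ℝ)
    (lam : ℝ) (hlam : 1 ≤ lam)
    (i : N) (S Xl : Finset M) (ji : M)
    (hji : ji ∉ S) (hdisj : Disjoint S Xl)
    (hiv : ∑ c ∈ S, d i c ≤ (lam - 1) * d i ji)
    (henvy : ∑ c ∈ insert ji S, d i c > lam * ∑ c ∈ Xl, d i c) :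
    ∑ c ∈ S ∪ Xl, d i c ≤ lam * d i ji := by
  rw [sum_insert hji] at henvy
  have hXl : ∑ c ∈ Xl, d i c < d i ji :=
    lt_of_mul_lt_add_of_le_sub_one_mul (by linarith) hiv henvy
  rw [sum_union hdisj]
  linarith

/-- A chore swap eliminates the λ-EFX-envy of the swapping agent towards the
chore `jᵢ` she gives away: after the swap, `d_i(X'_i) ≤ λ·d_i(jᵢ)`. -/
theorem stmt_6 {N M : Type*} [Fintype N] [DecidableEq M]
    (d : N → M → ℝ) (hd : ∀ i j, 0 < d i j)
    (lam : ℝ) (hlam : 1 ≤ lam)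
    (i : N) (S Xl : Finset M) (ji : M)
    (hji : ji ∉ S) (hdisj : Disjoint S Xl)
    (hiv : ∑ c ∈ S, d i c ≤ (lam - 1) * d i ji)
    (henvy : ∑ c ∈ insert ji S, d i c > lam * ∑ c ∈ Xl, d i c) :
    ∑ c ∈ S ∪ Xl, d i c ≤ lam * d i ji :=
  stmt_6_general d lam hlam i S Xl ji hji hdisj hiv henvy
end

section
/- An MPB allocation that is pEF1 is 2-EFX-friendly: let (X,p) be an integral MPB allocation with all bundles nonempty that is pEF1 (for all i, h: p_{-1}(X_i) ≤ p(X_h)), with disutilities scaled so that d_{ij} = p_j for j ∈ X_i and d_{ij} ≥ p_j for all j. Let ρ = min_i p(X_i), j_i = argmax_{j∈X_i} p_j, S_i = X_i \ {j_i}, N_0 = {i : p_{j_i} ≤ ρ}, N_H = {i : p_{j_i} > ρ}. Then: (i) for i ∈ N_0 and k ∈ N_0, d_i(X_i) ≤ 2·d_i(X_k); (ii) for i ∈ N_0 and h ∈ N_H, d_i(X_i) ≤ 2·d_i(j_h); (iii) for i ∈ N_H and k ∈ N_0, d_i(S_i) ≤ d_i(X_k); (iv) for i, h ∈ N_H, d_i(S_i)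 ≤ d_i(j_h). -/
/-! Comparing with a bundle of minimum price `ρ`, pEF1 gives `p(Sᵢ) ≤ ρ` for every agent `i`.
Since `dᵢ` agrees with `p` on `Xᵢ` and dominates `p` everywhere, each of the four bounds follows
linearly from `p(Sᵢ) ≤ ρ ≤ p(X_k)`, `p(jᵢ) ≤ ρ` for `i ∈ N₀` and `ρ < p(j_h)` for `h ∈ N_H`. -/

open Finset

theorem stmt_9_general {N M : Type*} [DecidableEq M]
    (d : N → M → ℝ)
    (p : M → ℝ)
    (X : N → Finset M)
    (jm : N → M) (hjmem : ∀ i, jm i ∈ X i)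
    (hscale : ∀ i, ∀ c ∈ X i, d i c = p c)
    (hge : ∀ i c, p c ≤ d i c)
    (hpEF1 : ∀ i h : N, ∑ c ∈ X i \ {jm i}, p c ≤ ∑ c ∈ X h, p c)
    (ρ : ℝ) (hρ : ∀ i, ρ ≤ ∑ c ∈ X i, p c) (hρex : ∃ i, ∑ c ∈ X i, p c = ρ) :
    (∀ i, p (jm i) ≤ ρ → ∀ k, p (jm k) ≤ ρ →
      ∑ c ∈ X i, d i c ≤ 2 * ∑ c ∈ X k, d i c) ∧
    (∀ i, p (jm i) ≤ ρ → ∀ h, ρ < p (jm h) →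
      ∑ c ∈ X i, d i c ≤ 2 * d i (jm h)) ∧
    (∀ i, ρ < p (jm i) → ∀ k, p (jm k) ≤ ρ →
      ∑ c ∈ X i \ {jm i}, d i c ≤ ∑ c ∈ X k, d i c) ∧
    (∀ i, ρ < p (jm i) → ∀ h, ρ < p (jm h) →
      ∑ c ∈ X i \ {jm i}, d i c ≤ d i (jm h)) := by
  obtain ⟨i₀, hi₀⟩ := hρex
  have hS_le : ∀ i, ∑ c ∈ X i \ {jm i}, p c ≤ ρ := fun i => hi₀ ▸ hpEF1 i i₀
  have hS_cost : ∀ i, ∑ c ∈ X i \ {jm i}, d i c = ∑ c ∈ X i \ {jm i}, p c := fun i =>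
    sum_congr rfl fun c hc => hscale i c (mem_sdiff.1 hc).1
  have hX_cost : ∀ i, ∑ c ∈ X i, d i c = ∑ c ∈ X i \ {jm i}, p c + p (jm i) := fun i => by
    rw [sum_congr rfl (hscale i), sum_eq_sum_sdiff_singleton_add (hjmem i)]
  have hX_price : ∀ i k, ∑ c ∈ X k, p c ≤ ∑ c ∈ X k, d i c := fun i k =>
    sum_le_sum fun c _ => hge i c
  refine ⟨fun i hi k _ => ?_, fun i hi h hh => ?_, fun i _ k _ => ?_, fun i _ h hh => ?_⟩
  · linarith [hX_cost i, hpEF1 i k, hρ k, hX_price i k]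
  · linarith [hX_cost i, hS_le i, hge i (jm h)]
  · linarith [hS_cost i, hpEF1 i k, hX_price i k]
  · linarith [hS_cost i, hS_le i, hge i (jm h)]

/-- An MPB allocation (scaled so that `d = p` on own bundles) that is pEF1
is 2-EFX-friendly, with `N₀ = {i : p(jᵢ) ≤ ρ}` and `N_H = {i : p(jᵢ) > ρ}`. -/
theorem stmt_9 {N M : Type*} [Fintype N] [DecidableEq M]
    (d : N → M → ℝ) (hd : ∀ i j, 0 < d i j)
    (p : M → ℝ) (hp : ∀ j, 0 < p j)
    (X : N → Finset M) (hne : ∀ i, (X i).Nonempty)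
    (jm : N → M) (hjmem : ∀ i, jm i ∈ X i)
    (hjmax : ∀ i, ∀ c ∈ X i, p c ≤ p (jm i))
    (hscale : ∀ i, ∀ c ∈ X i, d i c = p c)
    (hge : ∀ i c, p c ≤ d i c)
    (hpEF1 : ∀ i h : N, ∑ c ∈ X i \ {jm i}, p c ≤ ∑ c ∈ X h, p c)
    (ρ : ℝ) (hρ : ∀ i, ρ ≤ ∑ c ∈ X i, p c) (hρex : ∃ i, ∑ c ∈ X i, p c = ρ) :
    (∀ i, p (jm i) ≤ ρ → ∀ k, p (jm k) ≤ ρ →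
      ∑ c ∈ X i, d i c ≤ 2 * ∑ c ∈ X k, d i c) ∧
    (∀ i, p (jm i) ≤ ρ → ∀ h, ρ < p (jm h) →
      ∑ c ∈ X i, d i c ≤ 2 * d i (jm h)) ∧
    (∀ i, ρ < p (jm i) → ∀ k, p (jm k) ≤ ρ →
      ∑ c ∈ X i \ {jm i}, d i c ≤ ∑ c ∈ X k, d i c) ∧
    (∀ i, ρ < p (jm i) → ∀ h, ρ < p (jm h) →
      ∑ c ∈ X i \ {jm i}, d i c ≤ d i (jm h)) :=
  stmt_9_general d p X jm hjmem hscale hge hpEF1 ρ hρ hρex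
end

section
/- Under the ER-rounding properties, agents with two high chores have bounded 4-EFX-friendly surplus: suppose Z is an EFX allocation of high-priced chores H (each with p_j > 1/2) with |Z_i| ≥ 2 for agent i, p(Y_i \ H) ≤ 1, d_i(j) = p_j for chores in Y_i and d_i(j) ≥ p_j otherwise, and p(Z_k) ≥ 1/2 for all k. Then for all agents k: d_i(Y_i) ≤ 4·d_i(Z_k), where Y_i = (Y_i \ H) ∪ Z_i. -/
open Finset

/- Writing `j₀` for a chore of `Z i` of least disutility, `d_i(Z_i) ≤ 2·d_i(Z_i \ {j₀})` because
`Z_i \ {j₀}` still contains a chore at least as costly as `j₀`. EFX bounds `d_i(Z_i \ {j₀})` by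
`d_i(Z_k)`, the low chores cost at most `1 ≤ 2·p(Z_k) ≤ 2·d_i(Z_k)`, and the two bounds add up
to `4·d_i(Z_k)`. -/

theorem Finset.exists_sum_le_two_mul_sum_erase {α β : Type*} [DecidableEq α]
    [Semiring β] [LinearOrder β] [IsOrderedRing β] {s : Finset α} {f : α → β}
    (hs : 2 ≤ s.card) (hf : ∀ c ∈ s, 0 ≤ f c) :
    ∃ j ∈ s, ∑ c ∈ s, f c ≤ 2 * ∑ c ∈ s.erase j, f c := by
  obtain ⟨j₀, hj₀, hmin⟩ := s.exists_min_image f (card_pos.mp (by omega))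
  obtain ⟨j₁, hj₁⟩ : (s.erase j₀).Nonempty := by
    rw [← card_pos, card_erase_of_mem hj₀]
    omega
  have hj₀_le : f j₀ ≤ ∑ c ∈ s.erase j₀, f c :=
    (hmin j₁ (mem_of_mem_erase hj₁)).trans
      (single_le_sum (fun c hc => hf c (mem_of_mem_erase hc)) hj₁)
  refine ⟨j₀, hj₀, ?_⟩
  rw [← add_sum_erase s f hj₀, two_mul]
  exact add_le_add_left hj₀_le _

theorem stmt_16_general {N M : Type*} [DecidableEq M]
    (d : N → M → ℝ) (p : M → ℝ) (hp : ∀ j, 0 < p j)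
    (H : Finset M)
    (Z : N → Finset M) (hZH : ∀ k, Z k ⊆ H)
    (hZefx : ∀ k k' : N, ∀ j ∈ Z k, ∑ c ∈ Z k \ {j}, d k c ≤ ∑ c ∈ Z k', d k c)
    (hZp : ∀ k, 1 / 2 ≤ ∑ c ∈ Z k, p c)
    (i : N) (A : Finset M) (hAH : Disjoint A H)
    (hA : ∑ c ∈ A, p c ≤ 1) (hcard : 2 ≤ (Z i).card)
    (hscale : ∀ c ∈ A ∪ Z i, d i c = p c)
    (hge : ∀ c, p c ≤ d i c) :
    ∀ k, ∑ c ∈ A ∪ Z i, d i c ≤ 4 * ∑ c ∈ Z k, d i c := by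
  intro k
  have hA_le : ∑ c ∈ A, d i c ≤ 1 := by
    rwa [sum_congr rfl fun c hc => hscale c (mem_union_left _ hc)]
  have hZk : 1 / 2 ≤ ∑ c ∈ Z k, d i c := (hZp k).trans (sum_le_sum fun c _ => hge c)
  obtain ⟨j₀, hj₀, hZi⟩ := exists_sum_le_two_mul_sum_erase (f := d i) hcard
    fun c _ => (hp c).le.trans (hge c)
  have hefx : ∑ c ∈ (Z i).erase j₀, d i c ≤ ∑ c ∈ Z k, d i c := by
    simpa only [sdiff_singleton_eq_erase] using hZefx i k j₀ hj₀
  rw [sum_union (hAH.mono_right (hZH i))]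
  linarith

/-- ER-rounding: an agent holding ≥ 2 high-priced chores of an EFX allocation
`Z` of `H`, plus low chores of total price ≤ 1, is 4-EFX towards every `Z k`. -/
theorem stmt_16 {N M : Type*} [Fintype N] [DecidableEq M]
    (d : N → M → ℝ) (p : M → ℝ) (hp : ∀ j, 0 < p j)
    (H : Finset M) (hpH : ∀ j ∈ H, 1 / 2 < p j)
    (Z : N → Finset M) (hZH : ∀ k, Z k ⊆ H)
    (hZefx : ∀ k k' : N, ∀ j ∈ Z k, ∑ c ∈ Z k \ {j}, d k c ≤ ∑ c ∈ Z k', d k c)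
    (hZp : ∀ k, 1 / 2 ≤ ∑ c ∈ Z k, p c)
    (i : N) (A : Finset M) (hAH : Disjoint A H)
    (hA : ∑ c ∈ A, p c ≤ 1) (hcard : 2 ≤ (Z i).card)
    (hscale : ∀ c ∈ A ∪ Z i, d i c = p c)
    (hge : ∀ c, p c ≤ d i c) :
    ∀ k, ∑ c ∈ A ∪ Z i, d i c ≤ 4 * ∑ c ∈ Z k, d i c :=
  stmt_16_general d p hp H Z hZH hZefx hZp i A hAH hA hcard hscale hge
end

section
/- If an allocation X of chores with additive disutilities is λ-EFX-friendly (per the four properties with partition N = N_0 ⊔ N_H), then there exists a λ-EFX allocation of the same chores among the same agents. -/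
open Finset

/-!
First the agents outside `N0` redistribute their top chores `jm h` among themselves by round
robin, agent `v` receiving `b v` in place of `jm v`; then they are processed in round-robin order.
Agent `v`, holding `Sᵥ ∪ {b v}`, looks at the other bundle `Z` it finds cheapest: if
`dᵥ(Z) < dᵥ(b v)` it hands `b v` to the owner of `Z` and takes `Z` in exchange. Either way
`dᵥ(Sᵥ) ≤ (λ - 1)·r` and what `v` adds to `Sᵥ` costs at most `r` for every rival bundle `r`, so
`v` ends up with at most `λ·r`. Later steps only enlarge bundles or turn one into a singleton
`{b u}` with `u` processed later, and `dᵥ(b v) ≤ dᵥ(b u)` by the round robin, so processed agents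
stay λ-EFX.
-/

section RoundRobin

variable {N α : Type*} [DecidableEq N] [LinearOrder α]

theorem Equiv.Perm.apply_mem_of_fixed_outside {σ : Equiv.Perm N} {L : List N}
    (hσ : ∀ i ∉ L, σ i = i) {x : N} (hx : x ∈ L) : σ x ∈ L := by
  by_contra hσx
  rw [σ.injective (hσ _ hσx)] at hσx
  exact hσx hx

/-- Round robin along `L`, with items indexed by agents: `σ v` is the item picked by `v`. -/
theorem exists_perm_pairwise_le (c : N → N → α) (L : List N) (hL : L.Nodup) :
    ∃ σ : Equiv.Perm N, (∀ i ∉ L, σ i = i) ∧ L.Pairwise fun v u => c v (σ v) ≤ c v (σ u) := by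
  induction L generalizing c with
  | nil => exact ⟨1, fun _ _ => rfl, List.Pairwise.nil⟩
  | cons v L ih =>
    obtain ⟨hvL, hL⟩ := List.nodup_cons.mp hL
    obtain ⟨u, hu, hmin⟩ := (v :: L).toFinset.exists_min_image (c v) ⟨v, by simp⟩
    rw [List.mem_toFinset] at hu
    obtain ⟨σ, hσ, hpair⟩ := ih (fun a x => c a (Equiv.swap v u x)) hL
    have hσv : (σ.trans (Equiv.swap v u)) v = u := by simp [hσ v hvL]
    refine ⟨σ.trans (Equiv.swap v u), fun i hi => ?_,
      List.pairwise_cons.mpr ⟨fun x hx => ?_, hpair⟩⟩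
    · rw [Equiv.trans_apply, hσ i (fun h => hi (List.mem_cons_of_mem v h))]
      exact Equiv.swap_apply_of_ne_of_ne (fun h => hi (h ▸ List.mem_cons_self))
        (fun h => hi (h ▸ hu))
    · rw [hσv]
      refine hmin _ (List.mem_toFinset.mpr ?_)
      have hσx := Equiv.Perm.apply_mem_of_fixed_outside hσ hx
      simp only [Equiv.trans_apply, Equiv.swap_apply_def]
      split_ifs <;> simp_all

end RoundRobin

section Allocation

variable {N M : Type*} [Fintype M] [DecidableEq N]

/-- Allocations are encoded by owner maps `o : M → N`, so that they partition the chores. -/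
def bundle (o : M → N) (i : N) : Finset M := {c | o c = i}

@[simp]
theorem mem_bundle {o : M → N} {i : N} {c : M} : c ∈ bundle o i ↔ o c = i := by
  simp [bundle]

theorem disjoint_bundle {o : M → N} {v w : N} (hvw : v ≠ w) : Disjoint (bundle o v) (bundle o w) :=
  disjoint_left.mpr fun _ hv hw => hvw ((mem_bundle.mp hv).symm.trans (mem_bundle.mp hw))

variable [DecidableEq M]

def reassign (o : M → N) (x : M) (v w : N) : M → N :=
  fun c => if c = x then w else if o c = w then v else o c

variable {o : M → N} {x : M} {v w : N}

theorem bundle_reassign_right (hvw : v ≠ w) : bundle (reassign o x v w) w = {x} := by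
  ext c
  simp only [mem_bundle, reassign, mem_singleton]
  split_ifs <;> grind

theorem bundle_reassign_left (hx : o x = v) (hvw : v ≠ w) :
    bundle (reassign o x v w) v = bundle o v \ {x} ∪ bundle o w := by
  ext c
  simp only [mem_bundle, reassign, mem_union, mem_sdiff, mem_singleton]
  split_ifs <;> grind

theorem bundle_reassign_of_ne (hx : o x = v) {h : N} (hv : h ≠ v) (hw : h ≠ w) :
    bundle (reassign o x v w) h = bundle o h := by
  ext c
  simp only [mem_bundle, reassign]
  split_ifs <;> grind

end Allocation

section Processing

variable {N M : Type*} [Fintype M] [DecidableEq N] (d : N → M → ℝ) (lam : ℝ) (b : N → M)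

/-- The rivals of `i` are the bundles it may have to compare with from now on: the current
bundles of the others, and the singletons `{b u}` that processing a pending `u` may create. -/
def AtMostRivals (L : List N) (o : M → N) (i : N) (a t : ℝ) : Prop :=
  (∀ h ≠ i, t ≤ a * ∑ c ∈ bundle o h, d i c) ∧ ∀ u ∈ L, t ≤ a * d i (b u)

variable {d lam b} {L : List N} {o : M → N} {i v w : N} {a a' t t' : ℝ}

namespace AtMostRivals

theorem mono (h : AtMostRivals d b L o i a t) (ht : t' ≤ t) : AtMostRivals d b L o i a t' :=
  ⟨fun g hg => ht.trans (h.1 g hg), fun u hu => ht.trans (h.2 u hu)⟩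

theorem add (h : AtMostRivals d b L o i a t) (h' : AtMostRivals d b L o i a' t') :
    AtMostRivals d b L o i (a + a') (t + t') :=
  ⟨fun g hg => by linarith [h.1 g hg, h'.1 g hg], fun u hu => by linarith [h.2 u hu, h'.2 u hu]⟩

theorem zero (hd : ∀ i c, 0 ≤ d i c) (ha : 0 ≤ a) : AtMostRivals d b L o i a 0 :=
  ⟨fun _ _ => mul_nonneg ha (sum_nonneg fun c _ => hd i c), fun u _ => mul_nonneg ha (hd i (b u))⟩

theorem of_cons (h : AtMostRivals d b (v :: L) o i a t) : AtMostRivals d b L o i a t :=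
  ⟨h.1, fun u hu => h.2 u (List.mem_cons_of_mem v hu)⟩

variable [DecidableEq M]

/-- Under `reassign`, every bundle either grows or becomes the singleton `{b v}`. -/
theorem reassign (hd : ∀ i c, 0 ≤ d i c) (ha : 0 ≤ a) (h : AtMostRivals d b (v :: L) o i a t)
    (hv : o (b v) = v) (hvw : v ≠ w) (hiw : i ≠ w) :
    AtMostRivals d b L (reassign o (b v) v w) i a t := by
  refine ⟨fun g hgi => ?_, h.of_cons.2⟩
  by_cases hgw : g = w
  · rw [hgw, bundle_reassign_right hvw, sum_singleton]
    exact h.2 v List.mem_cons_self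
  by_cases hgv : g = v
  · rw [hgv, bundle_reassign_left hv hvw]
    refine (h.1 w (Ne.symm hiw)).trans (mul_le_mul_of_nonneg_left ?_ ha)
    exact sum_le_sum_of_subset_of_nonneg subset_union_right fun c _ _ => hd i c
  · rw [bundle_reassign_of_ne hv hgv hgw]
    exact h.1 g hgi

end AtMostRivals

variable (d lam b) [DecidableEq M]

def Settled (L : List N) (o : M → N) (i : N) : Prop :=
  ∀ c ∈ bundle o i, AtMostRivals d b L o i lam (∑ c' ∈ bundle o i \ {c}, d i c')

def Pending (L : List N) (o : M → N) (i : N) : Prop :=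
  i ∈ L ∧ b i ∈ bundle o i ∧
    AtMostRivals d b L o i (lam - 1) (∑ c ∈ bundle o i \ {b i}, d i c)

variable {d lam b}

theorem Settled.of_cons (h : Settled d lam b (v :: L) o i) : Settled d lam b L o i :=
  fun c hc => (h c hc).of_cons

theorem Pending.of_cons (h : Pending d lam b (v :: L) o i) (hiv : i ≠ v) : Pending d lam b L o i :=
  ⟨(List.mem_cons.mp h.1).resolve_left hiv, h.2.1, h.2.2.of_cons⟩

theorem settled_of_bundle_eq_singleton (hd : ∀ i c, 0 ≤ d i c) (hlam : 0 ≤ lam) {x : M}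
    (hx : bundle o i = {x}) : Settled d lam b L o i := by
  intro c hc
  rw [hx] at hc ⊢
  simp only [mem_singleton.mp hc, sdiff_self, bot_eq_empty, sum_empty]
  exact AtMostRivals.zero hd hlam

/-- As `λ = (λ - 1) + 1`, even the whole bundle is below `λ` times every rival. -/
theorem settled_of_sum_le (hd : ∀ i c, 0 ≤ d i c) {s s' : ℝ}
    (hsum : ∑ c ∈ bundle o i, d i c ≤ s + s') (hs : AtMostRivals d b L o i (lam - 1) s)
    (hs' : AtMostRivals d b L o i 1 s') : Settled d lam b L o i := by
  intro c _
  have hsdiff : ∑ c' ∈ bundle o i \ {c}, d i c' ≤ ∑ c' ∈ bundle o i, d i c' :=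
    sum_le_sum_of_subset_of_nonneg sdiff_subset fun c _ _ => hd i c
  simpa using (hs.add hs').mono (hsdiff.trans hsum)

theorem Pending.settled_of_le (hd : ∀ i c, 0 ≤ d i c) (hp : Pending d lam b (v :: L) o v)
    (hle : ∀ g ≠ v, d v (b v) ≤ ∑ c ∈ bundle o g, d v c) (hhead : ∀ u ∈ L, d v (b v) ≤ d v (b u)) :
    Settled d lam b (v :: L) o v := by
  refine settled_of_sum_le hd (sum_eq_sum_sdiff_singleton_add hp.2.1 _).le hp.2.2
    ⟨fun g hg => by simpa using hle g hg, fun u hu => ?_⟩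
  rcases List.mem_cons.mp hu with rfl | hu
  · simp
  · simpa using hhead u hu

theorem Pending.settled_reassign (hd : ∀ i c, 0 ≤ d i c) (hlam : 1 ≤ lam)
    (hp : Pending d lam b (v :: L) o v) (hvw : v ≠ w)
    (hlt : ∑ c ∈ bundle o w, d v c < d v (b v))
    (hmin : ∀ g ≠ v, ∑ c ∈ bundle o w, d v c ≤ ∑ c ∈ bundle o g, d v c)
    (hhead : ∀ u ∈ L, d v (b v) ≤ d v (b u)) :
    Settled d lam b L (reassign o (b v) v w) v := by
  have hv : o (b v) = v := mem_bundle.mp hp.2.1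
  have hsum : ∑ c ∈ bundle (reassign o (b v) v w) v, d v c =
      ∑ c ∈ bundle o v \ {b v}, d v c + ∑ c ∈ bundle o w, d v c := by
    rw [bundle_reassign_left hv hvw, sum_union ((disjoint_bundle hvw).mono_left sdiff_subset)]
  refine settled_of_sum_le hd hsum.le (hp.2.2.reassign hd (by linarith) hv hvw hvw)
    ⟨fun g hgv => ?_, fun u hu => by simpa using hlt.le.trans (hhead u hu)⟩
  by_cases hgw : g = w
  · rw [hgw, bundle_reassign_right hvw, sum_singleton, one_mul]
    exact hlt.le
  · rw [bundle_reassign_of_ne hv hgv hgw, one_mul]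
    exact hmin g hgv

variable (d lam b) in
def SettledOrPending (L : List N) (o : M → N) : Prop :=
  ∀ i, Settled d lam b L o i ∨ Pending d lam b L o i

theorem SettledOrPending.of_cons (h : SettledOrPending d lam b (v :: L) o)
    (hv : Settled d lam b (v :: L) o v) : SettledOrPending d lam b L o := by
  intro i
  by_cases hiv : i = v
  · exact .inl (hiv ▸ hv.of_cons)
  · exact (h i).imp Settled.of_cons fun hp => hp.of_cons hiv

theorem SettledOrPending.reassign (hd : ∀ i c, 0 ≤ d i c) (hlam : 1 ≤ lam)
    (h : SettledOrPending d lam b (v :: L) o) (hv : o (b v) = v) (hvw : v ≠ w)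
    (hsettled : Settled d lam b L (reassign o (b v) v w) v) :
    SettledOrPending d lam b L (reassign o (b v) v w) := by
  intro i
  by_cases hiv : i = v
  · exact .inl (hiv ▸ hsettled)
  by_cases hiw : i = w
  · subst hiw
    exact .inl (settled_of_bundle_eq_singleton hd (by linarith) (bundle_reassign_right hvw))
  have hbundle := bundle_reassign_of_ne hv hiv hiw
  rcases h i with hs | hp
  · refine .inl fun c hc => ?_
    rw [hbundle] at hc ⊢
    exact (hs c hc).reassign hd (by linarith) hv hvw hiw
  · refine .inr ⟨(List.mem_cons.mp hp.1).resolve_left hiv, hbundle ▸ hp.2.1, ?_⟩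
    rw [hbundle]
    exact hp.2.2.reassign hd (by linarith) hv hvw hiw

theorem Settled.sum_sdiff_le (hd : ∀ i c, 0 ≤ d i c) (hlam : 1 ≤ lam) (hs : Settled d lam b L o i)
    (g : N) {c : M} (hc : c ∈ bundle o i) :
    ∑ c' ∈ bundle o i \ {c}, d i c' ≤ lam * ∑ c' ∈ bundle o g, d i c' := by
  by_cases hgi : g = i
  · subst hgi
    exact (sum_le_sum_of_subset_of_nonneg sdiff_subset fun c _ _ => hd g c).trans
      (le_mul_of_one_le_left (sum_nonneg fun c _ => hd g c) hlam)
  · exact (hs c hc).1 g hgi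

variable [Fintype N]

theorem SettledOrPending.exists_of_cons (hd : ∀ i c, 0 ≤ d i c) (hlam : 1 ≤ lam)
    (hpair : (v :: L).Pairwise fun v u => d v (b v) ≤ d v (b u))
    (h : SettledOrPending d lam b (v :: L) o) : ∃ o', SettledOrPending d lam b L o' := by
  have hhead : ∀ u ∈ L, d v (b v) ≤ d v (b u) := (List.pairwise_cons.mp hpair).1
  rcases h v with hs | hp
  · exact ⟨o, h.of_cons hs⟩
  by_cases hcheap : ∃ g ≠ v, ∑ c ∈ bundle o g, d v c < d v (b v)
  · obtain ⟨g, hgv, hg⟩ := hcheap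
    obtain ⟨w, hw, hmin⟩ := (univ.erase v).exists_min_image (fun g => ∑ c ∈ bundle o g, d v c)
      ⟨g, mem_erase.mpr ⟨hgv, mem_univ g⟩⟩
    have hvw : v ≠ w := Ne.symm (mem_erase.mp hw).1
    have hmin' : ∀ g ≠ v, ∑ c ∈ bundle o w, d v c ≤ ∑ c ∈ bundle o g, d v c :=
      fun g hg => hmin g (mem_erase.mpr ⟨hg, mem_univ g⟩)
    exact ⟨_, h.reassign hd hlam (mem_bundle.mp hp.2.1) hvw
      (hp.settled_reassign hd hlam hvw ((hmin' g hgv).trans_lt hg) hmin' hhead)⟩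
  · push Not at hcheap
    exact ⟨o, h.of_cons (hp.settled_of_le hd hcheap hhead)⟩

theorem SettledOrPending.exists_settled (hd : ∀ i c, 0 ≤ d i c) (hlam : 1 ≤ lam)
    (hpair : L.Pairwise fun v u => d v (b v) ≤ d v (b u)) (h : SettledOrPending d lam b L o) :
    ∃ o', ∀ i, Settled d lam b [] o' i := by
  induction L generalizing o with
  | nil => exact ⟨o, fun i => (h i).resolve_right fun hp => List.not_mem_nil hp.1⟩
  | cons v L ih =>
    obtain ⟨o', h'⟩ := h.exists_of_cons hd hlam hpair
    exact ih (List.pairwise_cons.mp hpair).2 h'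

end Processing

section Initial

variable {N M : Type*} [Fintype M] [DecidableEq N] [DecidableEq M]

def passTopChores (own : M → N) (jm : N → M) (σ : Equiv.Perm N) : M → N :=
  fun c => if c = jm (own c) then σ.symm (own c) else own c

variable {X : N → Finset M} {own : M → N} {jm : N → M} {σ : Equiv.Perm N}

theorem bundle_passTopChores (hown : ∀ c i, own c = i ↔ c ∈ X i) (hjm : ∀ i, jm i ∈ X i)
    (i : N) : bundle (passTopChores own jm σ) i = insert (jm (σ i)) (X i \ {jm i}) := by
  ext c
  simp only [mem_bundle, passTopChores, mem_insert, mem_sdiff, mem_singleton, ← hown c]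
  split_ifs with hc
  · rw [Equiv.symm_apply_eq]
    grind
  · grind

variable {d : N → M → ℝ} {lam : ℝ} {N0 : Finset N} {L : List N}

theorem atMostRivals_passTopChores (hd : ∀ i c, 0 ≤ d i c) (hown : ∀ c i, own c = i ↔ c ∈ X i)
    (hjm : ∀ i, jm i ∈ X i) (hL : ∀ i, i ∈ L ↔ i ∉ N0) (hσ : ∀ i ∉ L, σ i = i) {i : N} {a t : ℝ}
    (ha : 0 ≤ a) (hX : ∀ k ∈ N0, t ≤ a * ∑ c ∈ X k, d i c) (hjm' : ∀ u ∉ N0, t ≤ a * d i (jm u)) :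
    AtMostRivals d (fun u => jm (σ u)) L (passTopChores own jm σ) i a t := by
  have hσL : ∀ u ∈ L, σ u ∉ N0 := fun u hu =>
    (hL _).mp (Equiv.Perm.apply_mem_of_fixed_outside hσ hu)
  refine ⟨fun g _ => ?_, fun u hu => hjm' _ (hσL u hu)⟩
  rw [bundle_passTopChores hown hjm]
  by_cases hg : g ∈ N0
  · rw [hσ g ((hL g).not_left.mpr hg), sdiff_singleton_eq_erase, insert_erase (hjm g)]
    exact hX g hg
  · refine (hjm' _ (hσL g ((hL g).mpr hg))).trans (mul_le_mul_of_nonneg_left ?_ ha)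
    exact single_le_sum (fun c _ => hd i c) (mem_insert_self _ _)

theorem settledOrPending_passTopChores (hd : ∀ i c, 0 ≤ d i c) (hlam : 1 ≤ lam)
    (hown : ∀ c i, own c = i ↔ c ∈ X i) (hjm : ∀ i, jm i ∈ X i) (hL : ∀ i, i ∈ L ↔ i ∉ N0)
    (hσ : ∀ i ∉ L, σ i = i)
    (h1 : ∀ i ∈ N0, ∀ k ∈ N0, ∑ c ∈ X i, d i c ≤ lam * ∑ c ∈ X k, d i c)
    (h2 : ∀ i ∈ N0, ∀ h ∉ N0, ∑ c ∈ X i, d i c ≤ lam * d i (jm h))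
    (h3 : ∀ i ∉ N0, ∀ k ∈ N0, ∑ c ∈ X i \ {jm i}, d i c ≤ (lam - 1) * ∑ c ∈ X k, d i c)
    (h4 : ∀ i ∉ N0, ∀ h ∉ N0, ∑ c ∈ X i \ {jm i}, d i c ≤ (lam - 1) * d i (jm h)) :
    SettledOrPending d lam (fun u => jm (σ u)) L (passTopChores own jm σ) := by
  intro i
  have hbundle := bundle_passTopChores hown hjm (σ := σ) i
  by_cases hi : i ∈ N0
  · refine .inl fun c _ => ?_
    rw [hσ i ((hL i).not_left.mpr hi), sdiff_singleton_eq_erase, insert_erase (hjm i)] at hbundle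
    rw [hbundle]
    exact (atMostRivals_passTopChores hd hown hjm hL hσ (by linarith) (h1 i hi) (h2 i hi)).mono
      (sum_le_sum_of_subset_of_nonneg sdiff_subset fun c _ _ => hd i c)
  · refine .inr ⟨(hL i).mpr hi, hbundle ▸ mem_insert_self _ _, ?_⟩
    rw [hbundle, insert_sdiff_of_mem _ (mem_singleton_self _)]
    exact (atMostRivals_passTopChores hd hown hjm hL hσ (by linarith) (h3 i hi) (h4 i hi)).mono
      (sum_le_sum_of_subset_of_nonneg sdiff_subset fun c _ _ => hd i c)

end Initial

theorem stmt_17_general {N M : Type*} [Fintype N] [Fintype M] [DecidableEq N] [DecidableEq M]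
    (d : N → M → ℝ) (hd : ∀ i j, 0 < d i j)
    (lam : ℝ) (hlam : 1 ≤ lam)
    (X : N → Finset M) (hpart : ∀ c : M, ∃! i, c ∈ X i)
    (N0 : Finset N)
    (jm : N → M) (hjmem : ∀ i, jm i ∈ X i)
    (h1 : ∀ i ∈ N0, ∀ k ∈ N0, ∑ c ∈ X i, d i c ≤ lam * ∑ c ∈ X k, d i c)
    (h2 : ∀ i ∈ N0, ∀ h ∉ N0, ∑ c ∈ X i, d i c ≤ lam * d i (jm h))
    (h3 : ∀ i ∉ N0, ∀ k ∈ N0, ∑ c ∈ X i \ {jm i}, d i c ≤ (lam - 1) * ∑ c ∈ X k, d i c)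
    (h4 : ∀ i ∉ N0, ∀ h ∉ N0, ∑ c ∈ X i \ {jm i}, d i c ≤ (lam - 1) * d i (jm h)) :
    ∃ Y : N → Finset M, (∀ c : M, ∃! i, c ∈ Y i) ∧
      ∀ i h : N, ∀ c ∈ Y i, ∑ c' ∈ Y i \ {c}, d i c' ≤ lam * ∑ c' ∈ Y h, d i c' := by
  have hd' : ∀ i c, 0 ≤ d i c := fun i c => (hd i c).le
  obtain ⟨σ, hσ, hpair⟩ :=
    exists_perm_pairwise_le (fun v u => d v (jm u)) N0ᶜ.toList (nodup_toList _)
  have hL : ∀ i, i ∈ N0ᶜ.toList ↔ i ∉ N0 := by simp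
  let own : M → N := fun c => Fintype.choose (fun i => c ∈ X i) (hpart c)
  have hown_mem : ∀ c, c ∈ X (own c) := fun c => Fintype.choose_spec _ (hpart c)
  have hown : ∀ c i, own c = i ↔ c ∈ X i := fun c i =>
    ⟨fun h => h ▸ hown_mem c, (hpart c).unique (hown_mem c)⟩
  have hstart := settledOrPending_passTopChores hd' hlam hown hjmem hL hσ h1 h2 h3 h4
  obtain ⟨o, ho⟩ := hstart.exists_settled hd' hlam hpair
  exact ⟨bundle o, fun c => ⟨o c, mem_bundle.mpr rfl, fun i hi => (mem_bundle.mp hi).symm⟩,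
    fun i g c hc => (ho i).sum_sdiff_le hd' hlam g hc⟩

/-- Framework theorem: a λ-EFX-friendly allocation yields a λ-EFX allocation
of the same chores among the same agents. -/
theorem stmt_17 {N M : Type*} [Fintype N] [Fintype M] [DecidableEq N] [DecidableEq M]
    (d : N → M → ℝ) (hd : ∀ i j, 0 < d i j)
    (lam : ℝ) (hlam : 1 ≤ lam)
    (X : N → Finset M) (hpart : ∀ c : M, ∃! i, c ∈ X i) (hne : ∀ i, (X i).Nonempty)
    (N0 : Finset N)
    (jm : N → M) (hjmem : ∀ i, jm i ∈ X i)
    (hjmax : ∀ i, ∀ c ∈ X i, d i c ≤ d i (jm i))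
    (h1 : ∀ i ∈ N0, ∀ k ∈ N0, ∑ c ∈ X i, d i c ≤ lam * ∑ c ∈ X k, d i c)
    (h2 : ∀ i ∈ N0, ∀ h ∉ N0, ∑ c ∈ X i, d i c ≤ lam * d i (jm h))
    (h3 : ∀ i ∉ N0, ∀ k ∈ N0, ∑ c ∈ X i \ {jm i}, d i c ≤ (lam - 1) * ∑ c ∈ X k, d i c)
    (h4 : ∀ i ∉ N0, ∀ h ∉ N0, ∑ c ∈ X i \ {jm i}, d i c ≤ (lam - 1) * d i (jm h)) :
    ∃ Y : N → Finset M, (∀ c : M, ∃! i, c ∈ Y i) ∧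
      ∀ i h : N, ∀ c ∈ Y i, ∑ c' ∈ Y i \ {c}, d i c' ≤ lam * ∑ c' ∈ Y h, d i c' :=
  stmt_17_general d hd lam hlam X hpart N0 jm hjmem h1 h2 h3 h4
end
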